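/- arXiv:0906.1356 — 7 statements merged into one kernel-verified Lean document; each statement's English description precedes it below -/
import Mathlib

section
/- If X is a discrete symmetric random variable (i.e., X and -X have the same distribution) with finite second moment E(X^2), then Prob(X ≥ sqrt(E(X^2))) > 0. -/
/-! If `X ≥ √E(X²)` had probability zero, then by symmetry so would `X ≤ -√E(X²)`; hence
`|X| < √E(X²)` almost surely, and averaging `X² < E(X²)` gives `E(X²) < E(X²)`. -/

open Finset

section SymmetricWeights

open Classical

variable {Ω : Type*} [Fintype Ω] {p : Ω → ℝ} {X : Ω → ℝ}

theorem exists_pos_weight_neg_of_symm (hp : ∀ ω, 0 ≤ p ω)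
    (hsym : ∀ a : ℝ,
      ∑ ω ∈ univ.filter (fun ω => X ω = a), p ω
        = ∑ ω ∈ univ.filter (fun ω => X ω = -a), p ω)
    {ω : Ω} (hω : 0 < p ω) : ∃ ω', 0 < p ω' ∧ X ω' = -X ω := by
  have hmass : 0 < ∑ ω' ∈ univ.filter (fun ω' => X ω' = X ω), p ω' :=
    hω.trans_le (single_le_sum (fun ω' _ => hp ω') (by simp))
  rw [hsym, sum_pos_iff_of_nonneg (fun ω' _ => hp ω')] at hmass
  obtain ⟨ω', hω', hpos⟩ := hmass
  exact ⟨ω', hpos, (mem_filter.1 hω').2⟩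

theorem abs_lt_of_symm_of_lt (hp : ∀ ω, 0 ≤ p ω)
    (hsym : ∀ a : ℝ,
      ∑ ω ∈ univ.filter (fun ω => X ω = a), p ω
        = ∑ ω ∈ univ.filter (fun ω => X ω = -a), p ω)
    {t : ℝ} (hlt : ∀ ω, 0 < p ω → X ω < t) {ω : Ω} (hω : 0 < p ω) : |X ω| < t := by
  obtain ⟨ω', hpos, hneg⟩ := exists_pos_weight_neg_of_symm hp hsym hω
  have hω'lt : X ω' < t := hlt ω' hpos
  exact abs_lt.2 ⟨by linarith, hlt ω hω⟩

end SymmetricWeights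

theorem sum_mul_sq_lt_sq {Ω : Type*} [Fintype Ω] {p : Ω → ℝ} {X : Ω → ℝ} {t : ℝ}
    (hp : ∀ ω, 0 ≤ p ω) (hsum : ∑ ω, p ω = 1) (hlt : ∀ ω, 0 < p ω → |X ω| < t) :
    ∑ ω, p ω * X ω ^ 2 < t ^ 2 := by
  have hsq : ∀ ω, 0 < p ω → X ω ^ 2 < t ^ 2 := fun ω hω =>
    sq_lt_sq' (abs_lt.1 (hlt ω hω)).1 (abs_lt.1 (hlt ω hω)).2
  obtain ⟨ω₀, -, hω₀⟩ : ∃ ω ∈ univ, 0 < p ω :=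
    (sum_pos_iff_of_nonneg fun ω _ => hp ω).1 (hsum ▸ one_pos)
  calc ∑ ω, p ω * X ω ^ 2 < ∑ ω, p ω * t ^ 2 := by
        refine sum_lt_sum (fun ω _ => ?_) ⟨ω₀, mem_univ _, mul_lt_mul_of_pos_left (hsq ω₀ hω₀) hω₀⟩
        rcases (hp ω).eq_or_lt with h0 | hpos
        · simp [← h0]
        · exact mul_le_mul_of_nonneg_left (hsq ω hpos).le hpos.le
    _ = t ^ 2 := by rw [← sum_mul, hsum, one_mul]

open Classical in
theorem stmt_0 {Ω : Type} [Fintype Ω] (p : Ω → ℝ) (X : Ω → ℝ)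
    (hp : ∀ ω, 0 ≤ p ω) (hsum : ∑ ω, p ω = 1)
    (hsym : ∀ a : ℝ,
      ∑ ω ∈ univ.filter (fun ω => X ω = a), p ω
        = ∑ ω ∈ univ.filter (fun ω => X ω = -a), p ω) :
    0 < ∑ ω ∈ univ.filter (fun ω => Real.sqrt (∑ ω', p ω' * X ω' ^ 2) ≤ X ω), p ω := by
  set m := Real.sqrt (∑ ω', p ω' * X ω' ^ 2)
  by_contra! hzero
  have hlt : ∀ ω, 0 < p ω → X ω < m := fun ω hω => by
    by_contra! hle
    exact hω.not_ge ((single_le_sum (fun ω' _ => hp ω') (by simpa using hle)).trans hzero)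
  have hmoment := sum_mul_sq_lt_sq hp hsum fun ω hω => abs_lt_of_symm_of_lt hp hsym hlt hω
  rw [Real.sq_sqrt (sum_nonneg fun ω _ => mul_nonneg (hp ω) (sq_nonneg _))] at hmoment
  exact hmoment.false
end

section
/- Let D = (V, A) be an oriented graph with positive real arc weights w_{ij}, n = |V|. Choose a bijection α : V → {1,...,n} uniformly at random and define X(α) = (1/2) Σ_{ij∈A} ε_{ij}(α), where ε_{ij}(α) = w_{ij} if α(i) < α(j) and ε_{ij}(α) = −w_{ij} otherwise. Then E(X^2) ≥ W^{(2)}/12, where W^{(2)} = Σ_{ij∈A} w_{ij}^2. -/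
/-!
Write `X = ½ ∑ₐ wₐ sₐ` with `sₐ = ±1` the order sign of the arc `a`. Relabelling by
transpositions shows that `E[sₐ s_b]` is `1` for `a = b`, `1/3` when the arcs share a tail or a
head, `-1/3` when they form a directed path and `0` when they are disjoint. As `D` has no pair of
opposite arcs, this is `(⟨dₐ, d_b⟩ + [a = b]) / 3` with `dₐ = e_tail - e_head` the incidence
vector of `a`, so `E[X²] = (‖∑ₐ wₐ dₐ‖² + W⁽²⁾) / 12 ≥ W⁽²⁾ / 12`.
-/

open Finset

section OrderSign

variable {V β : Type*} [LinearOrder β]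

def orderSign (α : V ≃ β) (i j : V) : ℝ := if α i < α j then 1 else -1

theorem orderSign_comm (α : V ≃ β) {i j : V} (h : i ≠ j) :
    orderSign α j i = -orderSign α i j := by
  have : α i ≠ α j := α.injective.ne h
  unfold orderSign
  split_ifs <;> first | norm_num; done | order

theorem orderSign_mul_self (α : V ≃ β) (i j : V) : orderSign α i j * orderSign α i j = 1 := by
  unfold orderSign
  split_ifs <;> norm_num

@[simp]
theorem orderSign_perm_trans (σ : Equiv.Perm V) (α : V ≃ β) (i j : V) :
    orderSign (σ.trans α) i j = orderSign α (σ i) (σ j) :=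
  rfl

-- Exactly one of three distinct vertices lies between the other two, and only for it do the two
-- signs disagree.
theorem orderSign_common_tail_cyclic_sum (α : V ≃ β) {i j k : V} (hij : i ≠ j) (hik : i ≠ k)
    (hjk : j ≠ k) :
    orderSign α i j * orderSign α i k + orderSign α j i * orderSign α j k
      + orderSign α k i * orderSign α k j = 1 := by
  have := α.injective.ne hij
  have := α.injective.ne hik
  have := α.injective.ne hjk
  unfold orderSign
  split_ifs <;> first | norm_num; done | order

variable [Fintype V] [DecidableEq V] [Fintype β]

theorem sum_perm_trans {M : Type*} [AddCommMonoid M] (σ : Equiv.Perm V) (f : (V ≃ β) → M) :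
    ∑ α : V ≃ β, f (σ.trans α) = ∑ α, f α :=
  Fintype.sum_equiv (σ.symm.equivCongr (Equiv.refl β)) _ _ fun α => congrArg f (by ext; simp)

theorem sum_orderSign_common_tail {i j k : V} (hij : i ≠ j) (hik : i ≠ k) (hjk : j ≠ k) :
    ∑ α : V ≃ β, orderSign α i j * orderSign α i k = Fintype.card (V ≃ β) / 3 := by
  have hswap_ij : ∑ α : V ≃ β, orderSign α j i * orderSign α j k
      = ∑ α : V ≃ β, orderSign α i j * orderSign α i k := by
    rw [← sum_perm_trans (Equiv.swap i j)]
    simp [Equiv.swap_apply_of_ne_of_ne hik.symm hjk.symm]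
  have hswap_ik : ∑ α : V ≃ β, orderSign α k i * orderSign α k j
      = ∑ α : V ≃ β, orderSign α i j * orderSign α i k := by
    rw [← sum_perm_trans (Equiv.swap i k)]
    simp [Equiv.swap_apply_of_ne_of_ne hij.symm hjk, mul_comm]
  have htotal := Fintype.sum_congr _ (fun _ => (1 : ℝ))
    fun α : V ≃ β => orderSign_common_tail_cyclic_sum α hij hik hjk
  simp only [sum_add_distrib, hswap_ij, hswap_ik, sum_const, card_univ, nsmul_one] at htotal
  linarith

theorem sum_orderSign_of_disjoint {i j k l : V} (hij : i ≠ j) (hki : k ≠ i) (hkj : k ≠ j)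
    (hli : l ≠ i) (hlj : l ≠ j) :
    ∑ α : V ≃ β, orderSign α i j * orderSign α k l = 0 := by
  have h := sum_perm_trans (Equiv.swap i j) fun α : V ≃ β => orderSign α i j * orderSign α k l
  simp only [orderSign_perm_trans, Equiv.swap_apply_left, Equiv.swap_apply_right,
    Equiv.swap_apply_of_ne_of_ne hki hkj, Equiv.swap_apply_of_ne_of_ne hli hlj,
    orderSign_comm _ hij, neg_mul, sum_neg_distrib] at h
  linarith

def incidence (a : V × V) : V → ℝ := Pi.single a.1 1 - Pi.single a.2 1

theorem sum_incidence_mul_incidence (a b : V × V) :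
    ∑ v, incidence a v * incidence b v =
      (if a.1 = b.1 then 1 else 0) - (if a.1 = b.2 then 1 else 0)
        - (if a.2 = b.1 then 1 else 0) + (if a.2 = b.2 then 1 else 0) := by
  simp only [incidence, Pi.sub_apply, Pi.single_apply, sub_mul, mul_sub, ite_mul, one_mul,
    zero_mul, sum_sub_distrib, sum_ite_eq', mem_univ, if_true]
  simp only [eq_comm]
  ring

theorem sum_orderSign_mul_orderSign {a b : V × V} (ha : a.1 ≠ a.2) (hb : b.1 ≠ b.2)
    (hab : b ≠ a.swap) :
    ∑ α : V ≃ β, orderSign α a.1 a.2 * orderSign α b.1 b.2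
      = Fintype.card (V ≃ β) / 3 *
          (∑ v, incidence a v * incidence b v + if a = b then 1 else 0) := by
  obtain ⟨i, j⟩ := a
  obtain ⟨k, l⟩ := b
  simp only [ne_eq, Prod.swap_prod_mk, Prod.mk.injEq, not_and] at ha hb hab ⊢
  rw [sum_incidence_mul_incidence]
  rcases eq_or_ne i k with rfl | hik
  · rcases eq_or_ne j l with rfl | hjl
    · simp [orderSign_mul_self, ha, Ne.symm ha]
      ring
    · rw [sum_orderSign_common_tail ha hb hjl]
      simp [hb, hjl, Ne.symm ha]
  · rcases eq_or_ne j l with rfl | hjl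
    · simp_rw [orderSign_comm _ (Ne.symm ha), orderSign_comm _ (Ne.symm hb), neg_mul_neg]
      rw [sum_orderSign_common_tail (Ne.symm ha) (Ne.symm hb) hik]
      simp [ha, hik, Ne.symm hb]
    · rcases eq_or_ne j k with rfl | hjk
      · have hil : i ≠ l := fun h => hab rfl h.symm
        simp_rw [orderSign_comm _ (Ne.symm ha), neg_mul, sum_neg_distrib]
        rw [sum_orderSign_common_tail (Ne.symm ha) hb hil]
        simp [ha, hil, hb]
      · rcases eq_or_ne i l with rfl | hil
        · simp_rw [orderSign_comm _ hik, mul_neg, sum_neg_distrib]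
          rw [sum_orderSign_common_tail ha hik hjk]
          simp [hik, hjk, Ne.symm ha]
        · rw [sum_orderSign_of_disjoint ha (Ne.symm hik) (Ne.symm hjk) (Ne.symm hil) (Ne.symm hjl)]
          simp [hik, hil, hjk, hjl]

theorem sum_sq_sum_mul_orderSign (A : Finset (V × V)) (w : V × V → ℝ)
    (hloop : ∀ a ∈ A, a.1 ≠ a.2) (horient : ∀ a ∈ A, (a.2, a.1) ∉ A) :
    ∑ α : V ≃ β, (∑ a ∈ A, w a * orderSign α a.1 a.2) ^ 2
      = Fintype.card (V ≃ β) / 3 *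
          (∑ v, (∑ a ∈ A, w a * incidence a v) ^ 2 + ∑ a ∈ A, w a ^ 2) := by
  have hcorr : ∀ a ∈ A, ∀ b ∈ A,
      ∑ α : V ≃ β, w a * w b * (orderSign α a.1 a.2 * orderSign α b.1 b.2)
        = Fintype.card (V ≃ β) / 3 *
          (∑ v, w a * incidence a v * (w b * incidence b v) + if a = b then w a * w b else 0) := by
    intro a ha b hb
    have hab : b ≠ a.swap := fun h => horient a ha (h ▸ hb : a.swap ∈ A)
    rw [← mul_sum, sum_orderSign_mul_orderSign (hloop a ha) (hloop b hb) hab, mul_left_comm,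
      mul_add, mul_sum, mul_ite, mul_one, mul_zero]
    congr 2
    exact sum_congr rfl fun v _ => by ring
  calc ∑ α : V ≃ β, (∑ a ∈ A, w a * orderSign α a.1 a.2) ^ 2
      = ∑ a ∈ A, ∑ b ∈ A, ∑ α : V ≃ β,
          w a * w b * (orderSign α a.1 a.2 * orderSign α b.1 b.2) := by
        simp_rw [sq, sum_mul_sum]
        rw [sum_comm]
        refine sum_congr rfl fun a _ => ?_
        rw [sum_comm]
        exact sum_congr rfl fun b _ => sum_congr rfl fun α _ => by ring
    _ = ∑ a ∈ A, ∑ b ∈ A, Fintype.card (V ≃ β) / 3 *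
          (∑ v, w a * incidence a v * (w b * incidence b v) + if a = b then w a * w b else 0) :=
        sum_congr rfl fun a ha => sum_congr rfl (hcorr a ha)
    _ = Fintype.card (V ≃ β) / 3 *
          (∑ a ∈ A, ∑ b ∈ A, ∑ v, w a * incidence a v * (w b * incidence b v)
            + ∑ a ∈ A, w a ^ 2) := by
        simp only [← mul_sum, sum_add_distrib]
        congr 2
        exact sum_congr rfl fun a ha => by simp [ha, sq]
    _ = _ := by
        congr 2
        simp_rw [sq, sum_mul_sum]
        exact (sum_comm.trans (sum_congr rfl fun a _ => sum_comm)).symm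

end OrderSign

theorem stmt_5_general {V : Type} [Fintype V] [DecidableEq V] (A : Finset (V × V))
    (w : V × V → ℝ) (hloop : ∀ a ∈ A, a.1 ≠ a.2)
    (horient : ∀ a ∈ A, (a.2, a.1) ∉ A)
    (X : (V ≃ Fin (Fintype.card V)) → ℝ)
    (hX : ∀ α, X α = (1 / 2) * ∑ a ∈ A, (if α a.1 < α a.2 then w a else - w a)) :
    (∑ a ∈ A, w a ^ 2) / 12 ≤
      (∑ α : V ≃ Fin (Fintype.card V), X α ^ 2)
        / (Fintype.card (V ≃ Fin (Fintype.card V)) : ℝ) := by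
  have hN : (0 : ℝ) < Fintype.card (V ≃ Fin (Fintype.card V)) := by
    exact_mod_cast Fintype.card_pos_iff.mpr ⟨Fintype.equivFin V⟩
  have hXsq : ∀ α, X α ^ 2 = (∑ a ∈ A, w a * orderSign α a.1 a.2) ^ 2 / 4 := fun α => by
    simp only [hX, orderSign, mul_ite, mul_one, mul_neg]
    ring
  have hgram : 0 ≤ ∑ v, (∑ a ∈ A, w a * incidence a v) ^ 2 :=
    sum_nonneg fun v _ => sq_nonneg _
  rw [Fintype.sum_congr _ _ hXsq, ← sum_div, sum_sq_sum_mul_orderSign A w hloop horient,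
    le_div_iff₀ hN]
  nlinarith

theorem stmt_5 {V : Type} [Fintype V] [DecidableEq V] (A : Finset (V × V))
    (w : V × V → ℝ) (hloop : ∀ a ∈ A, a.1 ≠ a.2)
    (horient : ∀ a ∈ A, (a.2, a.1) ∉ A) (hw : ∀ a ∈ A, 0 < w a)
    (X : (V ≃ Fin (Fintype.card V)) → ℝ)
    (hX : ∀ α, X α = (1 / 2) * ∑ a ∈ A, (if α a.1 < α a.2 then w a else - w a)) :
    (∑ a ∈ A, w a ^ 2) / 12 ≤
      (∑ α : V ≃ Fin (Fintype.card V), X α ^ 2)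
        / (Fintype.card (V ≃ Fin (Fintype.card V)) : ℝ) :=
  stmt_5_general A w hloop horient X hX
end

section
/- Let D = (V, A) be an oriented graph with positive integral arc weights and total weight W, and let k be a positive integer. If Σ_{ij∈A} w_{ij}^2 ≥ 12k^2 then there exists an acyclic subdigraph of D of total weight at least W/2 + k. In particular, since weights are integral, if |A| ≥ 12k^2 then such a subdigraph exists. -/
/-
For a linear ordering `σ` of `V`, the arcs going forward in `σ` form an acyclic subdigraph of
weight `(W + f σ) / 2`, where `f σ = ∑ₐ wₐ εₐ(σ)` and `εₐ(σ) = ±1` records whether `a` goes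
forward. Over a uniformly random ordering, `E[εₐ ε_b] = (⟨∂a, ∂b⟩ + [a = b]) / 3`, where
`∂a = e_tail - e_head` is the signed incidence vector of `a` (this is where orientedness enters).
Hence `3 E[f²] = ‖∑ₐ wₐ ∂a‖² + ∑ₐ wₐ² ≥ ∑ₐ wₐ²`, so some ordering has `f² ≥ ∑ₐ wₐ² / 3`, and after
reversing it if necessary, `f ≥ √(∑ₐ wₐ² / 3) ≥ 2k`.
-/

open Finset

/-- A directed cycle in the arc set `A`: a closed walk of length ≥ 1. -/
def HasDirCycle {V : Type} (A : Finset (V × V)) : Prop :=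
  ∃ (v : V) (l : List V), List.Chain (fun x y => (x, y) ∈ A) v (l ++ [v])

theorem not_hasDirCycle_of_forall_lt {V α : Type} [Preorder α] {A : Finset (V × V)} (f : V → α)
    (hf : ∀ a ∈ A, f a.1 < f a.2) : ¬ HasDirCycle A := by
  rintro ⟨v, l, hcycle⟩
  have hchain : (v :: (l ++ [v])).IsChain (fun x y => (x, y) ∈ A) := hcycle
  have hlt := List.isChain_iff_pairwise.mp
    (List.isChain_map_of_isChain f (fun x y hxy => hf (x, y) hxy) hchain)
  rw [List.map_cons, List.pairwise_cons] at hlt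
  exact lt_irrefl _ (hlt.1 (f v) (by simp))

theorem sum_sq_sum_eq_sum_sum_sum_mul {ι α : Type} (s : Finset ι) (t : Finset α)
    (f : α → ι → ℝ) :
    ∑ i ∈ s, (∑ a ∈ t, f a i) ^ 2 = ∑ a ∈ t, ∑ b ∈ t, ∑ i ∈ s, f a i * f b i := by
  simp_rw [sq, sum_mul_sum]
  rw [sum_comm]
  exact sum_congr rfl fun a _ => sum_comm

namespace LinearOrdering

variable {V : Type} {n : ℕ}

noncomputable def orderSign (σ : V ≃ Fin n) (p q : V) : ℝ :=
  if σ p < σ q then 1 else -1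

theorem orderSign_comm (σ : V ≃ Fin n) {p q : V} (h : p ≠ q) :
    orderSign σ q p = -orderSign σ p q := by
  have : σ p ≠ σ q := σ.injective.ne h
  unfold orderSign
  split_ifs <;> norm_num <;> order

theorem orderSign_mul_self (σ : V ≃ Fin n) (p q : V) :
    orderSign σ p q * orderSign σ p q = 1 := by
  unfold orderSign
  split_ifs <;> norm_num

theorem orderSign_trans_revPerm (σ : V ≃ Fin n) {p q : V} (h : p ≠ q) :
    orderSign (σ.trans Fin.revPerm) p q = -orderSign σ p q := by
  rw [← orderSign_comm σ h]
  simp [orderSign]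

/- `orderSign σ u v * orderSign σ u x = 1` exactly when `u` comes first or last among `u, v, x`:
two of the three vertices do, and the middle one contributes `-1`. -/
theorem orderSign_cyclic (σ : V ≃ Fin n) {u v x : V} (huv : u ≠ v) (hux : u ≠ x)
    (hvx : v ≠ x) :
    orderSign σ u v * orderSign σ u x + orderSign σ v u * orderSign σ v x
      + orderSign σ x u * orderSign σ x v = 1 := by
  have := σ.injective.ne huv
  have := σ.injective.ne hux
  have := σ.injective.ne hvx
  unfold orderSign
  split_ifs <;> norm_num <;> order

theorem orderSign_swap_trans [DecidableEq V] (σ : V ≃ Fin n) (u v p q : V) :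
    orderSign ((Equiv.swap u v).trans σ) p q
      = orderSign σ (Equiv.swap u v p) (Equiv.swap u v q) :=
  rfl

theorem sum_swap_trans [Fintype V] [DecidableEq V] (u v : V) (F : (V ≃ Fin n) → ℝ) :
    ∑ σ, F ((Equiv.swap u v).trans σ) = ∑ σ, F σ :=
  Equiv.sum_comp (Equiv.equivCongr (Equiv.swap u v) (Equiv.refl _)) F

section Correlation

variable [Fintype V] [DecidableEq V]

theorem three_mul_sum_orderSign_mul_orderSign_same_left {u v x : V} (huv : u ≠ v)
    (hux : u ≠ x) (hvx : v ≠ x) :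
    3 * ∑ σ : V ≃ Fin n, orderSign σ u v * orderSign σ u x = Fintype.card (V ≃ Fin n) := by
  have hv : ∑ σ : V ≃ Fin n, orderSign σ v u * orderSign σ v x
      = ∑ σ : V ≃ Fin n, orderSign σ u v * orderSign σ u x := by
    rw [← sum_swap_trans u v]
    simp only [orderSign_swap_trans, Equiv.swap_apply_left, Equiv.swap_apply_right,
      Equiv.swap_apply_of_ne_of_ne hux.symm hvx.symm]
  have hx : ∑ σ : V ≃ Fin n, orderSign σ x u * orderSign σ x v
      = ∑ σ : V ≃ Fin n, orderSign σ u v * orderSign σ u x := by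
    rw [← sum_swap_trans u x]
    simp only [orderSign_swap_trans, Equiv.swap_apply_left, Equiv.swap_apply_right,
      Equiv.swap_apply_of_ne_of_ne huv.symm hvx, mul_comm]
  have hsum := sum_congr rfl fun (σ : V ≃ Fin n) (_ : σ ∈ univ) =>
    orderSign_cyclic σ huv hux hvx
  rw [sum_add_distrib, sum_add_distrib, hv, hx] at hsum
  simp only [sum_const, card_univ, nsmul_eq_mul, mul_one] at hsum
  linarith

theorem sum_orderSign_mul_orderSign_of_disjoint {u v x y : V} (huv : u ≠ v) (hxu : x ≠ u)
    (hxv : x ≠ v) (hyu : y ≠ u) (hyv : y ≠ v) :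
    ∑ σ : V ≃ Fin n, orderSign σ u v * orderSign σ x y = 0 := by
  have hneg : ∑ σ : V ≃ Fin n, orderSign σ u v * orderSign σ x y
      = -∑ σ : V ≃ Fin n, orderSign σ u v * orderSign σ x y := by
    conv_lhs => rw [← sum_swap_trans u v]
    rw [← sum_neg_distrib]
    refine sum_congr rfl fun σ _ => ?_
    rw [orderSign_swap_trans, orderSign_swap_trans, Equiv.swap_apply_left,
      Equiv.swap_apply_right, Equiv.swap_apply_of_ne_of_ne hxu hxv,
      Equiv.swap_apply_of_ne_of_ne hyu hyv, orderSign_comm σ huv, neg_mul]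
  linarith

noncomputable def boundary (a : V × V) : V → ℝ :=
  Pi.single a.1 1 - Pi.single a.2 1

theorem sum_boundary_mul_boundary (a b : V × V) :
    ∑ v, boundary a v * boundary b v
      = (if a.1 = b.1 then 1 else 0) - (if a.1 = b.2 then 1 else 0)
        - (if a.2 = b.1 then 1 else 0) + (if a.2 = b.2 then 1 else 0) := by
  simp [boundary, mul_sub, sum_sub_distrib, Pi.single_apply, eq_comm]
  ring

theorem three_mul_sum_orderSign_mul_orderSign_arcs {a b : V × V} (ha : a.1 ≠ a.2)
    (hb : b.1 ≠ b.2) (hanti : (b.2, b.1) ≠ a) :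
    3 * ∑ σ : V ≃ Fin n, orderSign σ a.1 a.2 * orderSign σ b.1 b.2
      = Fintype.card (V ≃ Fin n)
        * (∑ v, boundary a v * boundary b v + if a = b then 1 else 0) := by
  obtain ⟨p, q⟩ := a
  obtain ⟨r, s⟩ := b
  rw [sum_boundary_mul_boundary]
  dsimp only at ha hb ⊢
  by_cases hsame : (p, q) = (r, s)
  · obtain ⟨rfl, rfl⟩ := Prod.mk.inj hsame
    simp [orderSign_mul_self, ha, ha.symm]
    ring
  by_cases hpr : p = r
  · subst hpr
    have hqs : q ≠ s := fun h => hsame (by rw [h])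
    rw [three_mul_sum_orderSign_mul_orderSign_same_left ha hb hqs]
    simp [hb, hqs, ha.symm]
  by_cases hqs : q = s
  · subst hqs
    have hflip (σ : V ≃ Fin n) :
        orderSign σ p q * orderSign σ r q = orderSign σ q p * orderSign σ q r := by
      rw [orderSign_comm σ ha, orderSign_comm σ hb, neg_mul_neg]
    rw [sum_congr rfl fun σ _ => hflip σ,
      three_mul_sum_orderSign_mul_orderSign_same_left ha.symm hb.symm hpr]
    simp [hpr, ha, hb.symm, hsame]
  by_cases hqr : q = r
  · subst hqr
    have hps : p ≠ s := fun h => hanti (by rw [h])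
    have hflip (σ : V ≃ Fin n) :
        orderSign σ p q * orderSign σ q s = -(orderSign σ q p * orderSign σ q s) := by
      rw [orderSign_comm σ ha, neg_mul, neg_neg]
    rw [sum_congr rfl fun σ _ => hflip σ, sum_neg_distrib, mul_neg,
      three_mul_sum_orderSign_mul_orderSign_same_left ha.symm hb hps]
    simp [hpr, hps, hqs]
  by_cases hps : p = s
  · subst hps
    have hflip (σ : V ≃ Fin n) :
        orderSign σ p q * orderSign σ r p = -(orderSign σ p q * orderSign σ p r) := by
      rw [orderSign_comm σ hb.symm, mul_neg]
    rw [sum_congr rfl fun σ _ => hflip σ, sum_neg_distrib, mul_neg,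
      three_mul_sum_orderSign_mul_orderSign_same_left ha hpr hqr]
    simp [hpr, hqs, hqr]
  rw [sum_orderSign_mul_orderSign_of_disjoint ha (Ne.symm hpr) (Ne.symm hqr) (Ne.symm hps)
    (Ne.symm hqs)]
  simp [hpr, hqs, hqr, hps, hsame]

end Correlation

section SignedWeight

variable (A : Finset (V × V)) (w : V × V → ℝ)

noncomputable def signedWeight (σ : V ≃ Fin n) : ℝ :=
  ∑ a ∈ A, w a * orderSign σ a.1 a.2

def forwardArcs (σ : V ≃ Fin n) : Finset (V × V) :=
  A.filter fun a => σ a.1 < σ a.2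

theorem not_hasDirCycle_forwardArcs (σ : V ≃ Fin n) : ¬ HasDirCycle (forwardArcs A σ) :=
  not_hasDirCycle_of_forall_lt σ fun _ ha => (mem_filter.mp ha).2

theorem sum_forwardArcs (σ : V ≃ Fin n) :
    ∑ a ∈ forwardArcs A σ, w a = (∑ a ∈ A, w a + signedWeight A w σ) / 2 := by
  have hsplit := sum_filter_add_sum_filter_not A (fun a => σ a.1 < σ a.2) w
  have hsigned : signedWeight A w σ
      = ∑ a ∈ A with σ a.1 < σ a.2, w a - ∑ a ∈ A with ¬σ a.1 < σ a.2, w a := by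
    simp only [signedWeight, orderSign, mul_ite, mul_one, mul_neg, sum_ite, sum_neg_distrib,
      sub_eq_add_neg]
  rw [forwardArcs]
  linarith

theorem signedWeight_trans_revPerm (hloop : ∀ a ∈ A, a.1 ≠ a.2) (σ : V ≃ Fin n) :
    signedWeight A w (σ.trans Fin.revPerm) = -signedWeight A w σ := by
  rw [signedWeight, signedWeight, ← sum_neg_distrib]
  exact sum_congr rfl fun a ha => by rw [orderSign_trans_revPerm σ (hloop a ha), mul_neg]

variable [Fintype V] [DecidableEq V]

theorem three_mul_sum_signedWeight_sq (hloop : ∀ a ∈ A, a.1 ≠ a.2)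
    (horient : ∀ a ∈ A, (a.2, a.1) ∉ A) :
    3 * ∑ σ : V ≃ Fin n, signedWeight A w σ ^ 2
      = Fintype.card (V ≃ Fin n)
        * (∑ v, (∑ a ∈ A, w a * boundary a v) ^ 2 + ∑ a ∈ A, w a ^ 2) := by
  have hdiag : ∑ a ∈ A, w a ^ 2 = ∑ a ∈ A, ∑ b ∈ A, w a * w b * if a = b then 1 else 0 := by
    simp [sq]
  simp only [signedWeight]
  rw [sum_sq_sum_eq_sum_sum_sum_mul, sum_sq_sum_eq_sum_sum_sum_mul, hdiag,
    ← sum_add_distrib, mul_sum, mul_sum]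
  refine sum_congr rfl fun a ha => ?_
  rw [← sum_add_distrib, mul_sum, mul_sum]
  refine sum_congr rfl fun b hb => ?_
  simp only [mul_mul_mul_comm (w a), ← mul_sum]
  rw [mul_left_comm, three_mul_sum_orderSign_mul_orderSign_arcs (hloop a ha) (hloop b hb)
    (fun h => horient b hb (h ▸ ha))]
  ring

theorem exists_sum_sq_le_three_mul_signedWeight_sq (hloop : ∀ a ∈ A, a.1 ≠ a.2)
    (horient : ∀ a ∈ A, (a.2, a.1) ∉ A) :
    ∃ σ : V ≃ Fin (Fintype.card V), ∑ a ∈ A, w a ^ 2 ≤ 3 * signedWeight A w σ ^ 2 := by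
  have hne : (univ : Finset (V ≃ Fin (Fintype.card V))).Nonempty :=
    ⟨Fintype.equivFin V, mem_univ _⟩
  have hquad : 0 ≤ ∑ v, (∑ a ∈ A, w a * boundary a v) ^ 2 :=
    sum_nonneg fun v _ => sq_nonneg _
  have hcard : (0 : ℝ) ≤ Fintype.card (V ≃ Fin (Fintype.card V)) := Nat.cast_nonneg _
  have haverage : ∑ _σ : V ≃ Fin (Fintype.card V), ∑ a ∈ A, w a ^ 2
      ≤ ∑ σ : V ≃ Fin (Fintype.card V), 3 * signedWeight A w σ ^ 2 := by
    rw [← mul_sum, three_mul_sum_signedWeight_sq A w hloop horient, sum_const, card_univ,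
      nsmul_eq_mul]
    nlinarith
  obtain ⟨σ, -, hσ⟩ := exists_le_of_sum_le hne haverage
  exact ⟨σ, hσ⟩

theorem exists_acyclic_subset_sum_ge (hloop : ∀ a ∈ A, a.1 ≠ a.2)
    (horient : ∀ a ∈ A, (a.2, a.1) ∉ A) :
    ∃ A' ⊆ A, ¬ HasDirCycle A' ∧
      (∑ a ∈ A, w a) / 2 + √((∑ a ∈ A, w a ^ 2) / 12) ≤ ∑ a ∈ A', w a := by
  obtain ⟨σ, hσ⟩ := exists_sum_sq_le_three_mul_signedWeight_sq A w hloop horient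
  obtain ⟨τ, hτ, hτ_nonneg⟩ : ∃ τ : V ≃ Fin (Fintype.card V),
      ∑ a ∈ A, w a ^ 2 ≤ 3 * signedWeight A w τ ^ 2 ∧ 0 ≤ signedWeight A w τ := by
    rcases le_total 0 (signedWeight A w σ) with h | h
    · exact ⟨σ, hσ, h⟩
    · refine ⟨σ.trans Fin.revPerm, ?_, ?_⟩ <;>
        rw [signedWeight_trans_revPerm A w hloop] <;> nlinarith
  refine ⟨forwardArcs A τ, filter_subset _ _, not_hasDirCycle_forwardArcs A τ, ?_⟩
  have hsqrt : √((∑ a ∈ A, w a ^ 2) / 12) ≤ signedWeight A w τ / 2 :=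
    Real.sqrt_le_iff.mpr ⟨by linarith, by nlinarith⟩
  rw [sum_forwardArcs]
  linarith

end SignedWeight

end LinearOrdering

open LinearOrdering in
theorem stmt_7_general {V : Type} [Fintype V] [DecidableEq V] (A : Finset (V × V))
    (w : V × V → ℕ) (hloop : ∀ a ∈ A, a.1 ≠ a.2)
    (horient : ∀ a ∈ A, (a.2, a.1) ∉ A) (hw : ∀ a ∈ A, 0 < w a)
    (k : ℕ) :
    ((12 * k ^ 2 : ℝ) ≤ ∑ a ∈ A, (w a : ℝ) ^ 2 →
      ∃ A' ⊆ A, ¬ HasDirCycle A' ∧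
        ((∑ a ∈ A, (w a : ℝ)) / 2 + k ≤ ∑ a ∈ A', (w a : ℝ))) ∧
    (12 * k ^ 2 ≤ A.card →
      ∃ A' ⊆ A, ¬ HasDirCycle A' ∧
        ((∑ a ∈ A, (w a : ℝ)) / 2 + k ≤ ∑ a ∈ A', (w a : ℝ))) := by
  have hweighted : (12 * k ^ 2 : ℝ) ≤ ∑ a ∈ A, (w a : ℝ) ^ 2 →
      ∃ A' ⊆ A, ¬ HasDirCycle A' ∧
        ((∑ a ∈ A, (w a : ℝ)) / 2 + k ≤ ∑ a ∈ A', (w a : ℝ)) := by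
    intro hsq
    obtain ⟨A', hA', hacyclic, hsum⟩ :=
      exists_acyclic_subset_sum_ge A (fun a => (w a : ℝ)) hloop horient
    have hk : (k : ℝ) ≤ √((∑ a ∈ A, (w a : ℝ) ^ 2) / 12) :=
      Real.le_sqrt_of_sq_le (by linarith)
    exact ⟨A', hA', hacyclic, by linarith⟩
  refine ⟨hweighted, fun hcard => hweighted ?_⟩
  calc (12 * k ^ 2 : ℝ) ≤ A.card := by exact_mod_cast hcard
    _ = ∑ a ∈ A, (1 : ℝ) ^ 2 := by simp
    _ ≤ ∑ a ∈ A, (w a : ℝ) ^ 2 := sum_le_sum fun a ha => by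
        gcongr
        exact_mod_cast hw a ha

theorem stmt_7 {V : Type} [Fintype V] [DecidableEq V] (A : Finset (V × V))
    (w : V × V → ℕ) (hloop : ∀ a ∈ A, a.1 ≠ a.2)
    (horient : ∀ a ∈ A, (a.2, a.1) ∉ A) (hw : ∀ a ∈ A, 0 < w a)
    (k : ℕ) (hk : 0 < k) :
    ((12 * k ^ 2 : ℝ) ≤ ∑ a ∈ A, (w a : ℝ) ^ 2 →
      ∃ A' ⊆ A, ¬ HasDirCycle A' ∧
        ((∑ a ∈ A, (w a : ℝ)) / 2 + k ≤ ∑ a ∈ A', (w a : ℝ))) ∧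
    (12 * k ^ 2 ≤ A.card →
      ∃ A' ⊆ A, ¬ HasDirCycle A' ∧
        ((∑ a ∈ A, (w a : ℝ)) / 2 + k ≤ ∑ a ∈ A', (w a : ℝ))) :=
  stmt_7_general A w hloop horient hw k
end

section
/- Let S be a weighted GF(2)-system of m equations with distinct equation index sets, positive integral weights, and a set U of variables such that each equation contains an odd number of variables from U. If m ≥ 4k^2 (k a positive integer), then there is an assignment of values to the variables such that the total weight of satisfied equations is at least W/2 + k, where W is the total weight. -/
/-!
Write `X(z) = ∑ⱼ wⱼ (-1)^(bⱼ + ∑_{i ∈ Iⱼ} zᵢ)`, so that the satisfied weight is `(W + X)/2`.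
The Walsh functions `z ↦ (-1)^(∑_{i ∈ A} zᵢ)` are orthogonal and the index sets are distinct,
so the mean of `X²` is `∑ⱼ wⱼ² ≥ m ≥ 4k²`. Adding the indicator of `U` flips the parity of every
equation and hence the sign of `X`, so `X` itself, not just `|X|`, reaches `2k`.
-/

open Finset

noncomputable def signChar : AddChar (ZMod 2) ℝ :=
  AddChar.zmodChar 2 (by norm_num : (-1 : ℝ) ^ 2 = 1)

lemma signChar_natCast (n : ℕ) : signChar n = (-1) ^ n :=
  AddChar.zmodChar_apply' _ n

lemma signChar_mul_signChar (a c : ZMod 2) :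
    signChar a * signChar c = if a = c then 1 else -1 := by
  have h1 : signChar 1 = -1 := by simpa using signChar_natCast 1
  obtain rfl | rfl := (by decide : ∀ x : ZMod 2, x = 0 ∨ x = 1) a <;>
  obtain rfl | rfl := (by decide : ∀ x : ZMod 2, x = 0 ∨ x = 1) c <;>
  norm_num [h1]

section Walsh

variable {ι : Type*}

noncomputable def walsh (A : Finset ι) : AddChar (ι → ZMod 2) ℝ where
  toFun z := signChar (∑ i ∈ A, z i)
  map_zero_eq_one' := by simp
  map_add_eq_mul' z z' := by simp [sum_add_distrib, AddChar.map_add_eq_mul]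

lemma walsh_apply (A : Finset ι) (z : ι → ZMod 2) :
    walsh A z = signChar (∑ i ∈ A, z i) := rfl

lemma walsh_inv (A : Finset ι) : (walsh A)⁻¹ = walsh A := by
  ext z
  rw [AddChar.inv_apply, walsh_apply, walsh_apply]
  simp only [Pi.neg_apply, ZMod.neg_eq_self_mod_two]

variable [DecidableEq ι]

lemma walsh_indicator (A U : Finset ι) :
    walsh A (fun i => if i ∈ U then 1 else 0) = (-1) ^ #(A ∩ U) := by
  rw [walsh_apply, sum_ite_mem, sum_const, nsmul_one, signChar_natCast]

lemma walsh_injective : Function.Injective (walsh : Finset ι → AddChar (ι → ZMod 2) ℝ) := by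
  intro A B hAB
  ext i
  have h := DFunLike.congr_fun hAB (fun j => if j ∈ ({i} : Finset ι) then 1 else 0)
  simp only [walsh_indicator] at h
  by_cases hA : i ∈ A <;> by_cases hB : i ∈ B <;> simp_all <;> norm_num at h

variable [Fintype ι]

lemma sum_walsh_mul_walsh (A B : Finset ι) :
    ∑ z, walsh A z * walsh B z = if A = B then (Fintype.card (ι → ZMod 2) : ℝ) else 0 := by
  simp_rw [← AddChar.mul_apply]
  rw [AddChar.sum_eq_ite]
  congr 1
  rw [← AddChar.one_eq_zero, mul_eq_one_iff_eq_inv, walsh_inv, walsh_injective.eq_iff]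

end Walsh

section Excess

variable {ι κ : Type*} [Fintype κ] (I : κ → Finset ι) (b : κ → ZMod 2) (w : κ → ℝ)

/-- The `X` of the Max Lin-2 setup: equation `j` contributes `w j` if it is satisfied by `z`
and `-w j` otherwise. -/
noncomputable def excess (z : ι → ZMod 2) : ℝ :=
  ∑ j, w j * (signChar (b j) * walsh (I j) z)

lemma sum_filter_satisfied_eq (z : ι → ZMod 2) :
    ∑ j ∈ univ.filter (fun j => ∑ i ∈ I j, z i = b j), w j = (∑ j, w j + excess I b w z) / 2 := by
  rw [sum_filter, excess, ← sum_add_distrib, sum_div]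
  refine sum_congr rfl fun j _ => ?_
  rw [walsh_apply, signChar_mul_signChar]
  by_cases h : ∑ i ∈ I j, z i = b j
  · simp [h]
  · simp [h, Ne.symm h]

variable {I} in
lemma excess_add_indicator [DecidableEq ι] {U : Finset ι} (hU : ∀ j, Odd #(I j ∩ U))
    (z : ι → ZMod 2) :
    excess I b w (z + fun i => if i ∈ U then 1 else 0) = -excess I b w z := by
  rw [excess, excess, ← sum_neg_distrib]
  refine sum_congr rfl fun j _ => ?_
  rw [AddChar.map_add_eq_mul, walsh_indicator, (hU j).neg_one_pow]
  ring

variable {I} in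
lemma sum_excess_sq [Fintype ι] [DecidableEq ι] (hI : Function.Injective I) :
    ∑ z, excess I b w z ^ 2 = Fintype.card (ι → ZMod 2) * ∑ j, w j ^ 2 := by
  have hsign (j : κ) : signChar (b j) * signChar (b j) = 1 := by
    rw [signChar_mul_signChar, if_pos rfl]
  calc ∑ z, excess I b w z ^ 2
      = ∑ j, ∑ j', w j * signChar (b j) * (w j' * signChar (b j')) *
          ∑ z, walsh (I j) z * walsh (I j') z := by
        simp_rw [excess, sq, sum_mul_sum, mul_sum]
        rw [sum_comm]
        refine sum_congr rfl fun j _ => ?_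
        rw [sum_comm]
        refine sum_congr rfl fun j' _ => sum_congr rfl fun z _ => ?_
        ring
    _ = ∑ j, w j ^ 2 * Fintype.card (ι → ZMod 2) := by
        refine sum_congr rfl fun j _ => ?_
        simp only [sum_walsh_mul_walsh]
        rw [Fintype.sum_eq_single j fun j' hj' => by rw [if_neg (hI.ne hj'.symm), mul_zero],
          if_pos rfl]
        linear_combination (w j ^ 2 * Fintype.card (ι → ZMod 2)) * hsign j
    _ = Fintype.card (ι → ZMod 2) * ∑ j, w j ^ 2 := by
        rw [← sum_mul, mul_comm]

end Excess

lemma exists_le_of_card_mul_sq_le_sum_sq {α : Type*} [Fintype α] [Nonempty α] {f : α → ℝ}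
    (σ : α → α) (hσ : ∀ x, f (σ x) = -f x) {c : ℝ} (hc : 0 ≤ c)
    (h : Fintype.card α * c ^ 2 ≤ ∑ x, f x ^ 2) : ∃ x, c ≤ f x := by
  obtain ⟨x, -, hx⟩ := exists_le_of_sum_le (f := fun _ => c ^ 2) univ_nonempty
    (by simpa using h)
  have hcx : c ≤ |f x| := (abs_of_nonneg hc).symm.trans_le (sq_le_sq.mp hx)
  rcases le_abs'.mp hcx with hneg | hpos
  · exact ⟨σ x, by rw [hσ]; linarith⟩
  · exact ⟨x, hpos⟩

theorem stmt_13_general (n m : ℕ) (I : Fin m → Finset (Fin n)) (b : Fin m → ZMod 2)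
    (w : Fin m → ℕ) (hw : ∀ j, 0 < w j)
    (hdist : Function.Injective I)
    (U : Finset (Fin n)) (hU : ∀ j, (I j ∩ U).card % 2 = 1)
    (k : ℕ) (hm : 4 * k ^ 2 ≤ m) :
    ∃ z : Fin n → ZMod 2,
      (∑ j, (w j : ℝ)) / 2 + k ≤
        ∑ j ∈ univ.filter (fun j => ∑ i ∈ I j, z i = b j), (w j : ℝ) := by
  have hweights : (2 * k : ℝ) ^ 2 ≤ ∑ j, (w j : ℝ) ^ 2 :=
    calc (2 * k : ℝ) ^ 2 ≤ m := by exact_mod_cast (by linarith : (2 * k) ^ 2 ≤ m)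
      _ = ∑ _j : Fin m, (1 : ℝ) ^ 2 := by simp
      _ ≤ ∑ j, (w j : ℝ) ^ 2 := sum_le_sum fun j _ => by
          gcongr; exact_mod_cast hw j
  obtain ⟨z, hz⟩ := exists_le_of_card_mul_sq_le_sum_sq (· + fun i => if i ∈ U then 1 else 0)
    (excess_add_indicator b (fun j => (w j : ℝ)) fun j => Nat.odd_iff.mpr (hU j))
    (c := 2 * k) (by positivity) (by rw [sum_excess_sq _ _ hdist]; gcongr)
  exact ⟨z, by rw [sum_filter_satisfied_eq]; linarith⟩

theorem stmt_13 (n m : ℕ) (I : Fin m → Finset (Fin n)) (b : Fin m → ZMod 2)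
    (w : Fin m → ℕ) (hI : ∀ j, (I j).Nonempty) (hw : ∀ j, 0 < w j)
    (hdist : Function.Injective I)
    (U : Finset (Fin n)) (hU : ∀ j, (I j ∩ U).card % 2 = 1)
    (k : ℕ) (hk : 0 < k) (hm : 4 * k ^ 2 ≤ m) :
    ∃ z : Fin n → ZMod 2,
      (∑ j, (w j : ℝ)) / 2 + k ≤
        ∑ j ∈ univ.filter (fun j => ∑ i ∈ I j, z i = b j), (w j : ℝ) :=
  stmt_13_general n m I b w hw hdist U hU k hm
end

section
/- Consider the GF(2)-system S_n consisting of the equations Σ_{i∈I} z_i = 1 for every nonempty subset I of {1,...,n}, all with weight 1, so m = 2^n − 1. With X = Σ_{∅≠I⊆{1,...,n}} (−1) Π_{i∈I} ε_i for independent uniform ±1 variables ε_i, we have E(X^2) = m and, for n ≥ 3, E(X^4) > (E(X^2))^3 / 8^3. -/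
/-!
Expanding `∏ i, (1 + ε i)` shows that `Σ_{I ≠ ∅} Π_{i ∈ I} ε i = ∏ i, (1 + ε i) - 1`, and for
`ε i = ±1` the product vanishes unless every `ε i = 1`. Hence `X = 1` at all points except the
all-`true` one, where `X = 1 - 2 ^ n`. Writing `m = 2 ^ n - 1`, the `k`-th moment is
`(m + (-m) ^ k) / (m + 1)`: the second moment is `m`, while the fourth is of order `m ^ 3`.
-/

open Finset

theorem sum_prod_nonempty_eq_prod_one_add_sub_one {ι R : Type*} [Fintype ι] [CommRing R]
    (x : ι → R) :
    ∑ I ∈ univ.filter (fun I : Finset ι => I.Nonempty), ∏ i ∈ I, x i = ∏ i, (1 + x i) - 1 := by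
  classical
  rw [prod_one_add, powerset_univ,
    ← sum_filter_add_sum_filter_not univ (fun I : Finset ι => I.Nonempty)]
  simp [not_nonempty_iff_eq_empty, filter_eq']

theorem prod_one_add_sign {ι R : Type*} [Fintype ι] [CommRing R] (σ : ι → Bool) :
    ∏ i, (1 + if σ i then (1 : R) else -1) =
      if σ = fun _ => true then 2 ^ Fintype.card ι else 0 := by
  split_ifs with h
  · subst h; simp [one_add_one_eq_two]
  · obtain ⟨i, hi⟩ : ∃ i, σ i = false := by
      by_contra! hc; exact h (funext fun i => by simpa using hc i)
    exact prod_eq_zero (mem_univ i) (by simp [hi])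

theorem sum_pow_ite_eq_one {α R : Type*} [Fintype α] [DecidableEq α] [CommRing R]
    (a : α) (c : R) (k : ℕ) :
    ∑ x, (if x = a then c else 1) ^ k = (Fintype.card α - 1 : R) + c ^ k := by
  rw [← add_sum_erase univ _ (mem_univ a), sum_congr rfl fun x hx => by rw [if_neg (ne_of_mem_erase hx)]]
  simp [card_erase_of_mem, add_comm, Nat.cast_pred (Fintype.card_pos_iff.mpr ⟨a⟩)]

theorem cube_div_eight_cube_lt {m : ℝ} (hm : 0 < m) : m ^ 3 / 8 ^ 3 < (m + m ^ 4) / (m + 1) := by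
  rw [div_lt_div_iff₀ (by norm_num) (by linarith)]
  nlinarith [sq_nonneg (m - 1), pow_pos hm 3, pow_pos hm 4, mul_pos hm hm]

theorem stmt_14 (n : ℕ)
    (X : (Fin n → Bool) → ℝ)
    (hX : ∀ σ, X σ = ∑ I ∈ univ.filter (fun I : Finset (Fin n) => I.Nonempty),
                       -(∏ i ∈ I, (if σ i then (1 : ℝ) else -1))) :
    (∑ σ : Fin n → Bool, X σ ^ 2) / (2 ^ n : ℝ) = (2 ^ n - 1 : ℝ) ∧
    (3 ≤ n →
      ((∑ σ : Fin n → Bool, X σ ^ 2) / (2 ^ n : ℝ)) ^ 3 / 8 ^ 3 <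
        (∑ σ : Fin n → Bool, X σ ^ 4) / (2 ^ n : ℝ)) := by
  have hX_ite : ∀ σ, X σ = if σ = fun _ => true then 1 - 2 ^ n else 1 := fun σ => by
    rw [hX, sum_neg_distrib, sum_prod_nonempty_eq_prod_one_add_sub_one, prod_one_add_sign,
      Fintype.card_fin]
    split_ifs <;> ring
  have hsum : ∀ k, ∑ σ, X σ ^ k = (2 ^ n - 1) + (1 - 2 ^ n) ^ k := fun k => by
    simp only [hX_ite, sum_pow_ite_eq_one, Fintype.card_fun, Fintype.card_bool, Fintype.card_fin]
    push_cast; rfl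
  obtain ⟨m, hm⟩ : ∃ m : ℝ, 2 ^ n = m + 1 := ⟨2 ^ n - 1, by ring⟩
  have hmoment2 : (∑ σ, X σ ^ 2) / 2 ^ n = m := by
    rw [hsum, hm, div_eq_iff (hm ▸ by positivity)]
    ring
  refine ⟨by rw [hmoment2, hm]; ring, fun hn => ?_⟩
  have hm_pos : 0 < m := by
    have : (1 : ℝ) < 2 ^ n := one_lt_pow₀ one_lt_two (by omega)
    linarith
  rw [hmoment2, hsum, hm, show (1 - (m + 1)) ^ 4 = m ^ 4 by ring, add_sub_cancel_right]
  exact cube_div_eight_cube_lt hm_pos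
end

section
/- Let Y and Z be two clauses, each with exactly r distinct variables, that have a conflict (there is a literal p ∈ Y with −p ∈ Z). Under a uniform random ±1-assignment, with X_Y, X_Z defined as X_C(x) = 2^{−r} if x satisfies C and 2^{−r} − 1 otherwise, we have E(X_Y X_Z) = −4^{−r}. -/
/-!
A conflict `p ∈ Y`, `-p ∈ Z` makes the events "`Y` is falsified" and "`Z` is falsified"
disjoint, so with `a = 2⁻ʳ` we get `X_Y X_Z = a² - a (𝟙[Y falsified] + 𝟙[Z falsified])`
pointwise. A clause on `r` distinct variables is falsified by exactly `2ⁿ⁻ʳ` assignments,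
hence `E(X_Y X_Z) = a² - 2a · 2⁻ʳ = -4⁻ʳ`.
-/

open Finset

/-- A clause is satisfied by an assignment `x` if some literal agrees with `x`. -/
def ClauseSat {n : ℕ} (x : Fin n → Bool) (Z : Finset (Fin n × Bool)) : Prop :=
  ∃ l ∈ Z, x l.1 = l.2

theorem card_filter_forall_ne_of_injOn {ι β : Type*} [Fintype ι] [DecidableEq ι] [Fintype β]
    [DecidableEq β] (C : Finset (ι × β)) (hC : Set.InjOn Prod.fst (C : Set (ι × β))) :
    #{x : ι → β | ∀ l ∈ C, x l.1 ≠ l.2} =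
      (Fintype.card β - 1) ^ #C * Fintype.card β ^ (Fintype.card ι - #C) := by
  set S := C.image Prod.fst
  let t : ι → Finset β := fun i => {b | ∀ l ∈ C, l.1 = i → b ≠ l.2}
  have hfilter : ({x | ∀ l ∈ C, x l.1 ≠ l.2} : Finset (ι → β)) = Fintype.piFinset t := by
    ext x
    simp only [mem_filter, mem_univ, true_and, Fintype.mem_piFinset, t]
    exact ⟨fun h i l hl hi => hi ▸ h l hl, fun h l hl => h l.1 l hl rfl⟩
  have hcard_t : ∀ i, #(t i) = if i ∈ S then Fintype.card β - 1 else Fintype.card β := by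
    intro i
    split_ifs with hi
    · obtain ⟨⟨j, b⟩, hl, rfl⟩ := mem_image.mp hi
      have : t j = univ.erase b := by
        ext c
        simp only [mem_filter, mem_univ, true_and, mem_erase, and_true, t]
        refine ⟨fun h => h _ hl rfl, fun h l' hl' hj => ?_⟩
        rwa [hC hl' hl hj]
      rw [this, card_erase_of_mem (mem_univ b), card_univ]
    · have : t i = univ := by
        ext c
        simp only [mem_filter, mem_univ, true_and, iff_true, t]
        exact fun l hl hli => absurd (mem_image.mpr ⟨l, hl, hli⟩) hi
      rw [this, card_univ]
  rw [hfilter, Fintype.card_piFinset, prod_congr rfl fun i _ => hcard_t i, prod_ite, prod_const,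
    prod_const, filter_not, filter_mem_eq_inter, univ_inter, ← compl_eq_univ_sdiff, card_compl,
    card_image_of_injOn hC]

theorem card_filter_not_clauseSat {n : ℕ} (C : Finset (Fin n × Bool))
    [DecidablePred (ClauseSat · C)] (hC : Set.InjOn Prod.fst (C : Set (Fin n × Bool))) :
    #{x | ¬ClauseSat x C} = 2 ^ (n - #C) := by
  have h := card_filter_forall_ne_of_injOn C hC
  simp only [Fintype.card_bool, Fintype.card_fin, Nat.add_one_sub_one, one_pow, one_mul] at h
  rw [← h]
  congr 1
  ext x
  simp only [ClauseSat, not_exists, not_and, ne_eq, mem_filter]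

theorem ClauseSat.of_not_of_conflict {n : ℕ} {Y Z : Finset (Fin n × Bool)} {p : Fin n × Bool}
    (hpY : p ∈ Y) (hpZ : (p.1, !p.2) ∈ Z) {x : Fin n → Bool} (hx : ¬ClauseSat x Y) :
    ClauseSat x Z :=
  ⟨_, hpZ, Bool.eq_not_of_ne fun h => hx ⟨p, hpY, h⟩⟩

theorem sum_ite_mul_ite_of_forall_or {α : Type*} [Fintype α] {P Q : α → Prop} [DecidablePred P]
    [DecidablePred Q] (hPQ : ∀ x, P x ∨ Q x) (a : ℝ) :
    ∑ x, (if P x then a else a - 1) * (if Q x then a else a - 1) =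
      Fintype.card α * a ^ 2 - a * (#{x | ¬P x} + #{x | ¬Q x}) := by
  have hpt : ∀ x, (if P x then a else a - 1) * (if Q x then a else a - 1) =
      a ^ 2 - a * ((if ¬P x then 1 else 0) + (if ¬Q x then 1 else 0)) := by
    intro x
    rcases hPQ x with hP | hQ
    · by_cases hQ : Q x <;> simp [hP, hQ] <;> ring
    · by_cases hP : P x <;> simp [hP, hQ] <;> ring
  simp only [hpt, sum_sub_distrib, ← mul_sum, sum_add_distrib, sum_boole, sum_const, card_univ,
    nsmul_eq_mul]

open Classical in
theorem stmt_17 (n r : ℕ) (Y Z : Finset (Fin n × Bool))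
    (hYcard : Y.card = r) (hYvars : (Y.image Prod.fst).card = r)
    (hZcard : Z.card = r) (hZvars : (Z.image Prod.fst).card = r)
    (hconf : ∃ p ∈ Y, (p.1, !p.2) ∈ Z)
    (XY XZ : (Fin n → Bool) → ℝ)
    (hXY : ∀ x, XY x = if ClauseSat x Y then ((2 : ℝ) ^ r)⁻¹ else ((2 : ℝ) ^ r)⁻¹ - 1)
    (hXZ : ∀ x, XZ x = if ClauseSat x Z then ((2 : ℝ) ^ r)⁻¹ else ((2 : ℝ) ^ r)⁻¹ - 1) :
    (∑ x : Fin n → Bool, XY x * XZ x) / (2 ^ n : ℝ) = -((4 : ℝ) ^ r)⁻¹ := by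
  obtain ⟨p, hpY, hpZ⟩ := hconf
  have hYinj : Set.InjOn Prod.fst (Y : Set (Fin n × Bool)) :=
    card_image_iff.mp (hYvars.trans hYcard.symm)
  have hZinj : Set.InjOn Prod.fst (Z : Set (Fin n × Bool)) :=
    card_image_iff.mp (hZvars.trans hZcard.symm)
  have hrn : r ≤ n := hYvars ▸ (card_le_univ _).trans_eq (Fintype.card_fin n)
  have hdisj : ∀ x, ClauseSat x Y ∨ ClauseSat x Z :=
    fun x => (Classical.em _).imp_right (ClauseSat.of_not_of_conflict hpY hpZ)
  simp only [hXY, hXZ]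
  rw [sum_ite_mul_ite_of_forall_or hdisj, card_filter_not_clauseSat Y hYinj,
    card_filter_not_clauseSat Z hZinj, hYcard, hZcard]
  simp only [Fintype.card_fun, Fintype.card_bool, Fintype.card_fin]
  push_cast
  rw [pow_sub₀ _ two_ne_zero hrn, show (4 : ℝ) = 2 ^ 2 by norm_num, ← pow_mul]
  field_simp
  ring
end

section
/- Let Y and Z be distinct clauses, each with exactly r distinct variables, that overlap in exactly t common literals (1 ≤ t < r) and share no other variables and have no conflict. Under a uniform random ±1-assignment, with X_C(x) = 2^{−r} if x satisfies C and 2^{−r} − 1 otherwise, we have E(X_Y X_Z) = 2^{t−2r}(1 − 2^{−t}), which is at least 4^{−r}. -/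
/-!
A clause without complementary literals on `k` variables is falsified by exactly `2^(n-k)`
assignments, i.e. with probability `2^-k`. Expanding `X_Y X_Z = (a - 𝟙[¬Y]) (a - 𝟙[¬Z])` with
`a = 2^-r` gives `E = a² - 2a·2^-r + P(¬Y ∧ ¬Z)`, and `¬Y ∧ ¬Z` is the falsification of the clause
`Y ∪ Z`, which is conflict-free on `2r - t` variables. Hence `E = 2^(t-2r) - 4^-r`.
-/

open Finset

def NoConflict {α : Type*} (Y Z : Finset (α × Bool)) : Prop :=
  ∀ l ∈ Y, (l.1, !l.2) ∉ Z

lemma card_filter_forall_mem_eq {ι β : Type*} [Fintype ι] [DecidableEq ι] [Fintype β]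
    [DecidableEq β] (S : Finset ι) (g : ι → β) :
    #{x : ι → β | ∀ i ∈ S, x i = g i} = Fintype.card β ^ (Fintype.card ι - #S) := by
  have : ({x : ι → β | ∀ i ∈ S, x i = g i} : Finset (ι → β))
      = Fintype.piFinset fun i => if i ∈ S then {g i} else univ := by
    ext x
    simp only [mem_filter, mem_univ, true_and, Fintype.mem_piFinset]
    refine ⟨fun h i => ?_, fun h i hi => by simpa [hi] using h i⟩
    split_ifs with hi
    · simpa using h i hi
    · exact mem_univ _
  simp only [this, Fintype.card_piFinset, apply_ite card, card_singleton, card_univ, prod_ite,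
    prod_const_one, prod_const, one_mul, filter_notMem_eq_sdiff, ← compl_eq_univ_sdiff, card_compl]

lemma not_clauseSat_iff {n : ℕ} {x : Fin n → Bool} {W : Finset (Fin n × Bool)} :
    ¬ ClauseSat x W ↔ ∀ l ∈ W, x l.1 = !l.2 := by
  simp only [ClauseSat, not_exists, not_and, Bool.eq_not_iff]

lemma clauseSat_union {n : ℕ} {x : Fin n → Bool} {Y Z : Finset (Fin n × Bool)} :
    ClauseSat x (Y ∪ Z) ↔ ClauseSat x Y ∨ ClauseSat x Z := by
  simp only [ClauseSat, mem_union, or_and_right, exists_or]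

open Classical in
lemma card_not_clauseSat {n : ℕ} (W : Finset (Fin n × Bool))
    (hW : NoConflict W W) :
    #{x : Fin n → Bool | ¬ ClauseSat x W} = 2 ^ (n - #(W.image Prod.fst)) := by
  have hfalsify : ∀ x : Fin n → Bool, ¬ ClauseSat x W ↔
      ∀ v ∈ W.image Prod.fst, x v = decide ((v, false) ∈ W) := by
    intro x
    -- without complementary literals, `(v, false) ∈ W` decides the value falsifying `v`
    have hlit : ∀ l ∈ W, decide ((l.1, false) ∈ W) = !l.2 := by
      rintro ⟨v, (_ | _)⟩ hl
      · simpa using hl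
      · simpa using hW _ hl
    simp only [not_clauseSat_iff, forall_mem_image]
    exact forall₂_congr fun l hl => by rw [hlit l hl]
  rw [filter_congr fun x _ => hfalsify x]
  convert card_filter_forall_mem_eq (W.image Prod.fst) fun v => decide ((v, false) ∈ W) <;> simp

open Classical in
lemma card_not_clauseSat_div_two_pow {n : ℕ} (W : Finset (Fin n × Bool))
    (hW : NoConflict W W) :
    (#{x : Fin n → Bool | ¬ ClauseSat x W} : ℝ) / 2 ^ n = ((2 : ℝ) ^ #(W.image Prod.fst))⁻¹ := by
  have hvars : #(W.image Prod.fst) ≤ n := by simpa using card_le_univ (W.image Prod.fst)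
  rw [card_not_clauseSat W hW, Nat.cast_pow, Nat.cast_ofNat, pow_sub₀ _ two_ne_zero hvars]
  field_simp

lemma noConflict_self_of_card_image_fst {α : Type*} [DecidableEq α] {W : Finset (α × Bool)}
    (hW : #(W.image Prod.fst) = #W) : NoConflict W W := by
  intro l hl hl'
  simpa using congrArg Prod.snd (card_image_iff.mp hW hl' hl rfl)

lemma NoConflict.union_self {α : Type*} [DecidableEq α] {Y Z : Finset (α × Bool)}
    (hYZ : NoConflict Y Z) (hY : NoConflict Y Y) (hZ : NoConflict Z Z) :
    NoConflict (Y ∪ Z) (Y ∪ Z) := by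
  simp only [NoConflict, mem_union]
  rintro l (hl | hl) (hl' | hl')
  · exact hY l hl hl'
  · exact hYZ l hl hl'
  · exact hYZ _ hl' (by simpa using hl)
  · exact hZ l hl hl'

lemma sum_ite_mul_ite_div_card {α : Type*} [Fintype α] [Nonempty α] (P Q : α → Prop)
    [DecidablePred P] [DecidablePred Q] (a : ℝ) :
    (∑ x, (if P x then a else a - 1) * (if Q x then a else a - 1)) / Fintype.card α
      = a ^ 2 - a * (#{x | ¬ P x} / Fintype.card α) - a * (#{x | ¬ Q x} / Fintype.card α)
        + #{x | ¬ P x ∧ ¬ Q x} / Fintype.card α := by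
  have hpoint : ∀ x, (if P x then a else a - 1) * (if Q x then a else a - 1)
      = a ^ 2 - a * (if ¬ P x then 1 else 0) - a * (if ¬ Q x then 1 else 0)
        + (if ¬ P x ∧ ¬ Q x then 1 else 0) := by
    intro x
    by_cases hP : P x <;> by_cases hQ : Q x <;> simp [hP, hQ] <;> ring
  have hcard : (Fintype.card α : ℝ) ≠ 0 := Nat.cast_ne_zero.mpr Fintype.card_ne_zero
  simp only [hpoint, sum_add_distrib, sum_sub_distrib, ← mul_sum, sum_boole, sum_const, card_univ,
    nsmul_eq_mul]
  field_simp

lemma two_zpow_sub_mul_one_sub_inv (r t : ℕ) :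
    (2 : ℝ) ^ ((t : ℤ) - 2 * r) * (1 - ((2 : ℝ) ^ t)⁻¹) = (2 ^ t - 1) / 4 ^ r := by
  rw [zpow_sub₀ two_ne_zero, zpow_natCast, zpow_mul, zpow_natCast,
    show (2 : ℝ) ^ (2 : ℤ) = 4 by norm_num]
  field_simp

lemma inv_two_pow_eq_div_four_pow {k r t : ℕ} (h : k + t = 2 * r) :
    ((2 : ℝ) ^ k)⁻¹ = 2 ^ t / 4 ^ r := by
  rw [show (4 : ℝ) ^ r = 2 ^ k * 2 ^ t by rw [← pow_add, h, pow_mul]; norm_num]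
  field_simp

open Classical in
theorem stmt_18_general (n r t : ℕ) (Y Z : Finset (Fin n × Bool))
    (hYcard : Y.card = r) (hYvars : (Y.image Prod.fst).card = r)
    (hZcard : Z.card = r) (hZvars : (Z.image Prod.fst).card = r)
    (ht1 : 1 ≤ t)
    (hvar : ((Y.image Prod.fst) ∩ (Z.image Prod.fst)).card = t)
    (hnoconf : ∀ p ∈ Y, (p.1, !p.2) ∉ Z)
    (XY XZ : (Fin n → Bool) → ℝ)
    (hXY : ∀ x, XY x = if ClauseSat x Y then ((2 : ℝ) ^ r)⁻¹ else ((2 : ℝ) ^ r)⁻¹ - 1)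
    (hXZ : ∀ x, XZ x = if ClauseSat x Z then ((2 : ℝ) ^ r)⁻¹ else ((2 : ℝ) ^ r)⁻¹ - 1) :
    (∑ x : Fin n → Bool, XY x * XZ x) / (2 ^ n : ℝ)
        = (2 : ℝ) ^ ((t : ℤ) - 2 * r) * (1 - ((2 : ℝ) ^ t)⁻¹) ∧
    ((4 : ℝ) ^ r)⁻¹ ≤ (2 : ℝ) ^ ((t : ℤ) - 2 * r) * (1 - ((2 : ℝ) ^ t)⁻¹) := by
  have hY := noConflict_self_of_card_image_fst (hYvars.trans hYcard.symm)
  have hZ := noConflict_self_of_card_image_fst (hZvars.trans hZcard.symm)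
  have hU : NoConflict (Y ∪ Z) (Y ∪ Z) := NoConflict.union_self hnoconf hY hZ
  have hUvars : #((Y ∪ Z).image Prod.fst) + t = 2 * r := by
    rw [image_union, ← hvar, card_union_add_card_inter, hYvars, hZvars, two_mul]
  have hUnsat : ∀ x, ¬ ClauseSat x Y ∧ ¬ ClauseSat x Z ↔ ¬ ClauseSat x (Y ∪ Z) := by
    simp only [clauseSat_union, not_or, implies_true]
  have hE : (∑ x : Fin n → Bool, XY x * XZ x) / (2 ^ n : ℝ) = (2 ^ t - 1) / 4 ^ r := by
    have hcard : (2 ^ n : ℝ) = Fintype.card (Fin n → Bool) := by simp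
    simp only [hXY, hXZ, hcard, sum_ite_mul_ite_div_card, filter_congr fun x _ => hUnsat x]
    rw [← hcard, card_not_clauseSat_div_two_pow _ hY, card_not_clauseSat_div_two_pow _ hZ,
      card_not_clauseSat_div_two_pow _ hU, hYvars, hZvars, inv_two_pow_eq_div_four_pow hUvars,
      show (4 : ℝ) ^ r = 2 ^ r * 2 ^ r by rw [← mul_pow]; norm_num]
    field_simp
    ring
  rw [two_zpow_sub_mul_one_sub_inv]
  refine ⟨hE, ?_⟩
  rw [inv_eq_one_div]
  have h2t : (2 : ℝ) ≤ 2 ^ t := le_self_pow₀ one_le_two (by omega)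
  gcongr
  linarith

open Classical in
theorem stmt_18 (n r t : ℕ) (Y Z : Finset (Fin n × Bool))
    (hYZ : Y ≠ Z)
    (hYcard : Y.card = r) (hYvars : (Y.image Prod.fst).card = r)
    (hZcard : Z.card = r) (hZvars : (Z.image Prod.fst).card = r)
    (ht1 : 1 ≤ t) (htr : t < r)
    (hlit : (Y ∩ Z).card = t)
    (hvar : ((Y.image Prod.fst) ∩ (Z.image Prod.fst)).card = t)
    (hnoconf : ∀ p ∈ Y, (p.1, !p.2) ∉ Z)
    (XY XZ : (Fin n → Bool) → ℝ)
    (hXY : ∀ x, XY x = if ClauseSat x Y then ((2 : ℝ) ^ r)⁻¹ else ((2 : ℝ) ^ r)⁻¹ - 1)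
    (hXZ : ∀ x, XZ x = if ClauseSat x Z then ((2 : ℝ) ^ r)⁻¹ else ((2 : ℝ) ^ r)⁻¹ - 1) :
    (∑ x : Fin n → Bool, XY x * XZ x) / (2 ^ n : ℝ)
        = (2 : ℝ) ^ ((t : ℤ) - 2 * r) * (1 - ((2 : ℝ) ^ t)⁻¹) ∧
    ((4 : ℝ) ^ r)⁻¹ ≤ (2 : ℝ) ^ ((t : ℤ) - 2 * r) * (1 - ((2 : ℝ) ^ t)⁻¹) :=
  stmt_18_general n r t Y Z hYcard hYvars hZcard hZvars ht1 hvar hnoconf XY XZ hXY hXZ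
end
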